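/- As h → 0 from the left, the interior Abelian integrals converge to the values of the corresponding integrals over the homoclinic loop: lim_{h→0⁻} I₀(h) = 4/3 and lim_{h→0⁻} I₂(h) = 16/15. -/

import Mathlib

open MeasureTheory

/-- Left endpoint `x₁(h) = √(1 − √(1+4h))` of the interior oval of the Duffing Hamiltonian
`H(x,y) = y²/2 − x²/2 + x⁴/4`. -/
noncomputable def x1 (h : ℝ) : ℝ := Real.sqrt (1 - Real.sqrt (1 + 4*h))

/-- Right endpoint `x₂(h) = √(1 + √(1+4h))` of the interior oval. -/
noncomputable def x2 (h : ℝ) : ℝ := Real.sqrt (1 + Real.sqrt (1 + 4*h))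

/-- The interior Abelian integrals `I_i(h) = 2∫_{x₁(h)}^{x₂(h)} xⁱ √(2h + x² − x⁴/2) dx`. -/
noncomputable def Iint (i : ℕ) (h : ℝ) : ℝ :=
  2 * ∫ x in x1 h..x2 h, x ^ i * Real.sqrt (2*h + x^2 - x^4/2)

open Filter Set intervalIntegral

lemma cont_integrand (i : ℕ) (h : ℝ) :
    Continuous (fun x : ℝ => x ^ i * Real.sqrt (2*h + x^2 - x^4/2)) :=
  (continuous_pow i).mul (Real.continuous_sqrt.comp (by continuity))

lemma interval_eq (i : ℕ) {h : ℝ} (h1 : -(1/4) < h) (h2 : h < 0) :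
    ∫ x in x1 h..x2 h, x ^ i * Real.sqrt (2*h + x^2 - x^4/2)
      = ∫ x in (0:ℝ)..Real.sqrt 2, x ^ i * Real.sqrt (2*h + x^2 - x^4/2) := by
  set s := Real.sqrt (1 + 4*h) with hsdef
  have hs0 : 0 ≤ s := Real.sqrt_nonneg _
  have h4 : 0 ≤ 1 + 4*h := by linarith
  have hs2 : s ^ 2 = 1 + 4*h := Real.sq_sqrt h4
  have hs1 : s ≤ 1 := by nlinarith
  have hx1 : (x1 h) ^ 2 = 1 - s := Real.sq_sqrt (by linarith)
  have hx2 : (x2 h) ^ 2 = 1 + s := Real.sq_sqrt (by linarith)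
  have hx1nn : 0 ≤ x1 h := Real.sqrt_nonneg _
  have hx2nn : 0 ≤ x2 h := Real.sqrt_nonneg _
  have h2r : x2 h ≤ Real.sqrt 2 := Real.sqrt_le_sqrt (by linarith)
  have hint : ∀ a b : ℝ,
      IntervalIntegrable (fun x => x ^ i * Real.sqrt (2*h + x^2 - x^4/2)) volume a b :=
    fun a b => (cont_integrand i h).intervalIntegrable _ _
  have e1 : (∫ x in (0:ℝ)..x1 h, x ^ i * Real.sqrt (2*h + x^2 - x^4/2)) = 0 := by
    rw [intervalIntegral.integral_congr (g := fun _ => (0:ℝ)), intervalIntegral.integral_const,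
      smul_zero]
    intro x hx
    rw [Set.uIcc_of_le hx1nn] at hx
    have hx0 : 0 ≤ x := hx.1
    have hxsq : x ^ 2 ≤ 1 - s := by nlinarith [hx.2]
    have hneg : 2*h + x^2 - x^4/2 ≤ 0 := by
      nlinarith [mul_nonneg (by linarith : (0:ℝ) ≤ 1 - s - x^2)
        (by linarith : (0:ℝ) ≤ 1 + s - x^2)]
    simp [Real.sqrt_eq_zero'.2 hneg]
  have e3 : (∫ x in x2 h..Real.sqrt 2, x ^ i * Real.sqrt (2*h + x^2 - x^4/2)) = 0 := by
    rw [intervalIntegral.integral_congr (g := fun _ => (0:ℝ)), intervalIntegral.integral_const,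
      smul_zero]
    intro x hx
    rw [Set.uIcc_of_le h2r] at hx
    have hx0 : 0 ≤ x := le_trans hx2nn hx.1
    have hxsq : 1 + s ≤ x ^ 2 := by nlinarith [hx.1]
    have hneg : 2*h + x^2 - x^4/2 ≤ 0 := by
      nlinarith [mul_nonneg (by linarith : (0:ℝ) ≤ x^2 - (1 - s))
        (by linarith : (0:ℝ) ≤ x^2 - (1 + s))]
    simp [Real.sqrt_eq_zero'.2 hneg]
  have d1 := intervalIntegral.integral_add_adjacent_intervals
    (hint 0 (x1 h)) (hint (x1 h) (x2 h))
  have d2 := intervalIntegral.integral_add_adjacent_intervals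
    (hint 0 (x2 h)) (hint (x2 h) (Real.sqrt 2))
  linarith [d1, d2]

lemma tendsto_G (i : ℕ) :
    Tendsto (fun h : ℝ => ∫ x in (0:ℝ)..Real.sqrt 2, x ^ i * Real.sqrt (2*h + x^2 - x^4/2))
      (nhdsWithin 0 (Set.Iio 0))
      (nhds (∫ x in (0:ℝ)..Real.sqrt 2, x ^ i * Real.sqrt (2*0 + x^2 - x^4/2))) := by
  apply intervalIntegral.tendsto_integral_filter_of_dominated_convergence
    (bound := fun x => |x| ^ i * |x|)
  · exact Filter.Eventually.of_forall fun h => (cont_integrand i h).aestronglyMeasurable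
  · filter_upwards [self_mem_nhdsWithin] with h hh
    refine Filter.Eventually.of_forall fun x _ => ?_
    have hh' : h < 0 := hh
    rw [Real.norm_eq_abs, abs_mul, abs_pow]
    have h1 : |Real.sqrt (2*h + x^2 - x^4/2)| = Real.sqrt (2*h + x^2 - x^4/2) :=
      abs_of_nonneg (Real.sqrt_nonneg _)
    rw [h1]
    have h2 : Real.sqrt (2*h + x^2 - x^4/2) ≤ |x| := by
      calc Real.sqrt (2*h + x^2 - x^4/2) ≤ Real.sqrt (x^2) :=
            Real.sqrt_le_sqrt (by nlinarith [sq_nonneg (x^2)])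
        _ = |x| := Real.sqrt_sq_eq_abs x
    exact mul_le_mul_of_nonneg_left h2 (pow_nonneg (abs_nonneg x) i)
  · exact ((continuous_abs.pow i).mul continuous_abs).intervalIntegrable _ _
  · refine Filter.Eventually.of_forall fun x _ => ?_
    have hc : Continuous (fun h : ℝ => x ^ i * Real.sqrt (2*h + x^2 - x^4/2)) :=
      continuous_const.mul (Real.continuous_sqrt.comp (by continuity))
    exact (hc.tendsto 0).mono_left nhdsWithin_le_nhds

lemma deriv_g (x : ℝ) : HasDerivAt (fun x : ℝ => 1 - x^2/2) (-x) x := by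
  have := ((hasDerivAt_pow 2 x).div_const 2).const_sub 1
  refine this.congr_deriv ?_
  push_cast
  ring

lemma sqrt2_sq : (Real.sqrt 2) ^ 2 = 2 := Real.sq_sqrt (by norm_num)

lemma integral_sqrt01 : (∫ u in (0:ℝ)..1, Real.sqrt u) = 2/3 := by
  rw [intervalIntegral.integral_congr (g := fun u : ℝ => u ^ ((1:ℝ)/2))
    (fun u _ => Real.sqrt_eq_rpow u)]
  rw [integral_rpow (Or.inl (by norm_num))]
  norm_num

lemma integral_usqrt01 : (∫ u in (0:ℝ)..1, u * Real.sqrt u) = 2/5 := by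
  rw [intervalIntegral.integral_congr (g := fun u : ℝ => u ^ ((3:ℝ)/2))]
  · rw [integral_rpow (Or.inl (by norm_num))]
    norm_num
  · intro u hu
    rw [Set.uIcc_of_le (by norm_num : (0:ℝ) ≤ 1)] at hu
    have hu0 : 0 ≤ u := hu.1
    show u * Real.sqrt u = u ^ ((3:ℝ)/2)
    rw [Real.sqrt_eq_rpow,
      show (3:ℝ)/2 = 1 + 1/2 by norm_num, Real.rpow_add' hu0 (by norm_num), Real.rpow_one]

lemma val0 : (∫ x in (0:ℝ)..Real.sqrt 2, x ^ 0 * Real.sqrt (2*0 + x^2 - x^4/2)) = 2/3 := by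
  have key : (∫ x in (0:ℝ)..Real.sqrt 2,
      (-x) • ((Real.sqrt ∘ (fun x => 1 - x^2/2)) x))
      = ∫ u in (1 - (0:ℝ)^2/2)..(1 - (Real.sqrt 2)^2/2), Real.sqrt u :=
    intervalIntegral.integral_comp_smul_deriv (fun x _ => deriv_g x)
      (continuous_neg.continuousOn) Real.continuous_sqrt
  rw [show (1 - (0:ℝ)^2/2) = 1 by norm_num,
    show (1 - (Real.sqrt 2)^2/2 : ℝ) = 0 by rw [sqrt2_sq]; norm_num,
    intervalIntegral.integral_symm 0 1, integral_sqrt01] at key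
  have congr1 : (∫ x in (0:ℝ)..Real.sqrt 2, x ^ 0 * Real.sqrt (2*0 + x^2 - x^4/2))
      = ∫ x in (0:ℝ)..Real.sqrt 2, x * Real.sqrt (1 - x^2/2) := by
    apply intervalIntegral.integral_congr
    intro x hx
    rw [Set.uIcc_of_le (Real.sqrt_nonneg 2)] at hx
    have hx0 : 0 ≤ x := hx.1
    simp only [pow_zero, one_mul]
    rw [show 2*0 + x^2 - x^4/2 = x^2 * (1 - x^2/2) by ring,
      Real.sqrt_mul (sq_nonneg x), Real.sqrt_sq hx0]
  rw [congr1]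
  have : (∫ x in (0:ℝ)..Real.sqrt 2, x * Real.sqrt (1 - x^2/2))
      = -∫ x in (0:ℝ)..Real.sqrt 2, (-x) • ((Real.sqrt ∘ (fun x => 1 - x^2/2)) x) := by
    rw [← intervalIntegral.integral_neg]
    apply intervalIntegral.integral_congr
    intro x _
    simp only [Function.comp, smul_eq_mul, neg_mul, neg_neg]
  rw [this]
  linarith [key]

lemma val2 : (∫ x in (0:ℝ)..Real.sqrt 2, x ^ 2 * Real.sqrt (2*0 + x^2 - x^4/2)) = 8/15 := by
  have hg : Continuous (fun u : ℝ => 2 * (1 - u) * Real.sqrt u) := by continuity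
  have key : (∫ x in (0:ℝ)..Real.sqrt 2,
      (-x) • (((fun u : ℝ => 2 * (1 - u) * Real.sqrt u) ∘ (fun x => 1 - x^2/2)) x))
      = ∫ u in (1 - (0:ℝ)^2/2)..(1 - (Real.sqrt 2)^2/2), 2 * (1 - u) * Real.sqrt u :=
    intervalIntegral.integral_comp_smul_deriv (fun x _ => deriv_g x)
      (continuous_neg.continuousOn) hg
  rw [show (1 - (0:ℝ)^2/2) = 1 by norm_num,
    show (1 - (Real.sqrt 2)^2/2 : ℝ) = 0 by rw [sqrt2_sq]; norm_num] at key
  have hval : (∫ u in (0:ℝ)..1, 2 * (1 - u) * Real.sqrt u) = 8/15 := by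
    have e : ∀ u : ℝ, 2 * (1 - u) * Real.sqrt u
        = 2 * Real.sqrt u - 2 * (u * Real.sqrt u) := fun u => by ring
    rw [intervalIntegral.integral_congr (g := fun u : ℝ =>
      2 * Real.sqrt u - 2 * (u * Real.sqrt u)) (fun u _ => e u)]
    have i1 : IntervalIntegrable (fun u : ℝ => 2 * Real.sqrt u) volume 0 1 :=
      (continuous_const.mul Real.continuous_sqrt).intervalIntegrable _ _
    have i2 : IntervalIntegrable (fun u : ℝ => 2 * (u * Real.sqrt u)) volume 0 1 :=
      (continuous_const.mul (continuous_id.mul Real.continuous_sqrt)).intervalIntegrable _ _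
    rw [intervalIntegral.integral_sub i1 i2, intervalIntegral.integral_const_mul,
      intervalIntegral.integral_const_mul, integral_sqrt01, integral_usqrt01]
    norm_num
  rw [intervalIntegral.integral_symm 0 1, hval] at key
  have congr1 : (∫ x in (0:ℝ)..Real.sqrt 2, x ^ 2 * Real.sqrt (2*0 + x^2 - x^4/2))
      = -∫ x in (0:ℝ)..Real.sqrt 2,
        (-x) • (((fun u : ℝ => 2 * (1 - u) * Real.sqrt u) ∘ (fun x => 1 - x^2/2)) x) := by
    rw [← intervalIntegral.integral_neg]
    apply intervalIntegral.integral_congr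
    intro x hx
    rw [Set.uIcc_of_le (Real.sqrt_nonneg 2)] at hx
    have hx0 : 0 ≤ x := hx.1
    simp only [Function.comp, smul_eq_mul]
    rw [show 2*0 + x^2 - x^4/2 = x^2 * (1 - x^2/2) by ring,
      Real.sqrt_mul (sq_nonneg x), Real.sqrt_sq hx0]
    ring
  rw [congr1, key]
  norm_num

lemma tendsto_Iint (i : ℕ) (c : ℝ)
    (hc : (∫ x in (0:ℝ)..Real.sqrt 2, x ^ i * Real.sqrt (2*0 + x^2 - x^4/2)) = c) :
    Filter.Tendsto (Iint i) (nhdsWithin 0 (Set.Iio 0)) (nhds (2 * c)) := by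
  have hmem : Set.Ioo (-(1/4) : ℝ) 0 ∈ nhdsWithin (0:ℝ) (Set.Iio 0) :=
    Ioo_mem_nhdsLT_of_mem (by constructor <;> norm_num)
  have h1 : Filter.Tendsto
      (fun h : ℝ => 2 * ∫ x in (0:ℝ)..Real.sqrt 2, x ^ i * Real.sqrt (2*h + x^2 - x^4/2))
      (nhdsWithin 0 (Set.Iio 0)) (nhds (2 * c)) := by
    rw [← hc]
    exact (tendsto_G i).const_mul 2
  refine h1.congr' ?_
  filter_upwards [hmem] with h hh
  unfold Iint
  rw [interval_eq i hh.1 hh.2]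

theorem Iint_limits_at_saddle :
    Filter.Tendsto (Iint 0) (nhdsWithin 0 (Set.Iio 0)) (nhds (4/3)) ∧
    Filter.Tendsto (Iint 2) (nhdsWithin 0 (Set.Iio 0)) (nhds (16/15)) := by
  constructor
  · have := tendsto_Iint 0 (2/3) val0
    norm_num at this
    exact this
  · have := tendsto_Iint 2 (8/15) val2
    norm_num at this
    exact this
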